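/- Let G be a finite group and x ∈ G. Then the subgroup ⟨x, y⟩ is nilpotent for every y ∈ G if and only if x lies in the hypercentre of G, i.e., there exists a natural number k such that x belongs to the k-th term Z^k(G) of the upper central series of G. -/

import Mathlib

open SimpleGraph

/-- The power graph of a group: distinct `x`,`y` adjacent iff one is a power of the other. -/
def powGraph (G : Type*) [Group G] : SimpleGraph G where
  Adj x y := x ≠ y ∧ (x ∈ Subgroup.zpowers y ∨ y ∈ Subgroup.zpowers x)
  symm := ⟨fun _ _ h => ⟨h.1.symm, h.2.symm⟩⟩
  loopless := ⟨fun _ h => h.1 rfl⟩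

/-- The enhanced power graph of a group: distinct `x`,`y` adjacent iff `⟨x,y⟩` is cyclic. -/
def epowGraph (G : Type*) [Group G] : SimpleGraph G where
  Adj x y := x ≠ y ∧ IsCyclic (Subgroup.closure ({x, y} : Set G))
  symm := by
    refine ⟨fun x y h => ?_⟩
    beta_reduce at h ⊢
    refine ⟨h.1.symm, ?_⟩
    rw [Set.pair_comm]
    exact h.2
  loopless := ⟨fun _ h => h.1 rfl⟩

/-- The commuting graph of a group: distinct `x`,`y` adjacent iff `x*y = y*x`. -/
def comGraph (G : Type*) [Group G] : SimpleGraph G where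
  Adj x y := x ≠ y ∧ Commute x y
  symm := ⟨fun _ _ h => ⟨h.1.symm, h.2.symm⟩⟩
  loopless := ⟨fun _ h => h.1 rfl⟩

/-- The non-generating graph of a group: distinct `x`,`y` adjacent iff `⟨x,y⟩ ≠ G`. -/
def ngenGraph (G : Type*) [Group G] : SimpleGraph G where
  Adj x y := x ≠ y ∧ Subgroup.closure ({x, y} : Set G) ≠ ⊤
  symm := by
    refine ⟨fun x y h => ?_⟩
    beta_reduce at h ⊢
    refine ⟨h.1.symm, ?_⟩
    rw [Set.pair_comm]
    exact h.2
  loopless := ⟨fun _ h => h.1 rfl⟩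

/-- The generating graph of a group: distinct `x`,`y` adjacent iff `⟨x,y⟩ = G`. -/
def genGraph (G : Type*) [Group G] : SimpleGraph G where
  Adj x y := x ≠ y ∧ Subgroup.closure ({x, y} : Set G) = ⊤
  symm := by
    refine ⟨fun x y h => ?_⟩
    beta_reduce at h ⊢
    refine ⟨h.1.symm, ?_⟩
    rw [Set.pair_comm]
    exact h.2
  loopless := ⟨fun _ h => h.1 rfl⟩

/-!
If `x ∈ Z^k(G)`, then `x` also lies in the `k`-th centre of `H = ⟨x, y⟩`, and `H / Z^k(H)` is
generated by the image of `y`; being cyclic it is abelian, so `Z^{k+1}(H) = H`.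

Conversely, suppose `⟨x, y⟩` is nilpotent for all `y` and `x ≠ 1`. In a nilpotent group
elements of coprime orders commute, so a power `w` of `x` of prime order `p` commutes with every
`p'`-element. Let `K` be the subgroup generated by the `p'`-elements. Conjugation by `G` on
`C_G(K) ∋ w` factors through the `p`-group `G / K`, so it has a nontrivial fixed point, i.e.
`Z(G) ≠ 1`. The hypothesis passes to `G / Z(G)`, and induction on `|G|` puts `x` in the
hypercentre.
-/

section

open Subgroup
open scoped commutatorElement

variable {G : Type*} [Group G]

theorem Subgroup.subgroupOf_upperCentralSeries_le (H : Subgroup G) (k : ℕ) :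
    (Subgroup.upperCentralSeries G k).subgroupOf H ≤ Subgroup.upperCentralSeries H k := by
  induction k with
  | zero =>
    intro h hh
    simpa [mem_subgroupOf] using hh
  | succ k ih =>
    intro h hh
    rw [mem_subgroupOf, Subgroup.mem_upperCentralSeries_succ_iff] at hh
    exact Subgroup.mem_upperCentralSeries_succ_iff.mpr fun y => ih (hh y)

theorem Group.isNilpotent_of_closure_pair_eq_top {a b : G} {k : ℕ}
    (hab : closure {a, b} = ⊤) (ha : a ∈ Subgroup.upperCentralSeries G k) :
    Group.IsNilpotent G := by
  let N := Subgroup.upperCentralSeries G k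
  have hcyclic : IsCyclic (G ⧸ N) := by
    refine isCyclic_iff_exists_zpowers_eq_top.mpr ⟨b, ?_⟩
    have hmap := congrArg (map (QuotientGroup.mk' N)) hab
    rw [MonoidHom.map_closure, Set.image_pair,
      map_top_of_surjective _ (QuotientGroup.mk'_surjective N), QuotientGroup.mk'_apply,
      (QuotientGroup.eq_one_iff a).mpr ha, closure_insert_one] at hmap
    rwa [zpowers_eq_closure]
  let := hcyclic.commGroup
  refine ⟨k + 1, eq_top_iff.mpr fun g _ =>
    Subgroup.mem_upperCentralSeries_succ_iff.mpr fun h => ?_⟩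
  rw [← QuotientGroup.eq_one_iff, ← QuotientGroup.mk'_apply, map_commutatorElement,
    commutatorElement_eq_one_iff_commute]
  exact mul_comm _ _

theorem isNilpotent_closure_pair_of_mem_upperCentralSeries {x : G} {k : ℕ}
    (hx : x ∈ Subgroup.upperCentralSeries G k) (y : G) : Group.IsNilpotent (closure {x, y}) := by
  let H := closure ({x, y} : Set G)
  let x' : H := ⟨x, subset_closure (by simp)⟩
  let y' : H := ⟨y, subset_closure (by simp)⟩
  have hgen : closure {x', y'} = ⊤ := by
    convert closure_closure_coe_preimage (k := ({x, y} : Set G)) using 2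
    ext ⟨g, hg⟩
    simp [x', y', Subtype.ext_iff]
  exact Group.isNilpotent_of_closure_pair_eq_top hgen
    (H.subgroupOf_upperCentralSeries_le k (mem_subgroupOf.mpr hx))

theorem commutatorElement_pow_left_of_mem_center {a b : G} (h : ⁅a, b⁆ ∈ center G) (n : ℕ) :
    ⁅a ^ n, b⁆ = ⁅a, b⁆ ^ n := by
  induction n with
  | zero => simp
  | succ n ih =>
    have hconj : a * b * a⁻¹ = ⁅a, b⁆ * b := by simp [commutatorElement_def]
    calc ⁅a ^ (n + 1), b⁆ = a ^ n * (a * b * a⁻¹) * (a ^ n)⁻¹ * b⁻¹ := by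
          simp [commutatorElement_def, pow_succ, mul_assoc]
      _ = ⁅a, b⁆ * ⁅a ^ n, b⁆ := by
          rw [hconj, ← mul_assoc (a ^ n), mem_center_iff.mp h (a ^ n)]
          simp only [commutatorElement_def, mul_assoc]
      _ = ⁅a, b⁆ ^ (n + 1) := by rw [ih, pow_succ']

theorem commutatorElement_eq_one_of_mem_center_of_coprime {a b : G} (h : ⁅a, b⁆ ∈ center G)
    (hab : (orderOf a).Coprime (orderOf b)) : ⁅a, b⁆ = 1 := by
  have hleft : ⁅a, b⁆ ^ orderOf a = 1 := by
    rw [← commutatorElement_pow_left_of_mem_center h, pow_orderOf_eq_one,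
      commutatorElement_one_left]
  have hright : ⁅a, b⁆⁻¹ ^ orderOf b = 1 := by
    have h' : ⁅b, a⁆ ∈ center G := commutatorElement_inv a b ▸ inv_mem h
    rw [commutatorElement_inv, ← commutatorElement_pow_left_of_mem_center h', pow_orderOf_eq_one,
      commutatorElement_one_left]
  rw [inv_pow, inv_eq_one] at hright
  exact orderOf_eq_one_iff.mp <| Nat.eq_one_of_dvd_coprimes hab
    (orderOf_dvd_of_pow_eq_one hleft) (orderOf_dvd_of_pow_eq_one hright)

theorem Group.IsNilpotent.commute_of_coprime_orderOf [Group.IsNilpotent G] {a b : G}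
    (hab : (orderOf a).Coprime (orderOf b)) : Commute a b := by
  suffices ∀ a b : G, (orderOf a).Coprime (orderOf b) → Commute a b from this a b hab
  refine Group.nilpotent_center_quotient_ind
    (P := fun G _ _ => ∀ a b : G, (orderOf a).Coprime (orderOf b) → Commute a b) G ?_ ?_
  · intro G _ _ a b _
    exact Subsingleton.elim a b ▸ Commute.refl a
  · intro G _ _ ih a b hab
    let π := QuotientGroup.mk' (center G)
    have hπ : Commute (π a) (π b) := ih _ _ <|
      (hab.coprime_dvd_left (orderOf_map_dvd π a)).coprime_dvd_right (orderOf_map_dvd π b)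
    have hcenter : ⁅a, b⁆ ∈ center G := by
      rw [← QuotientGroup.eq_one_iff, ← QuotientGroup.mk'_apply, map_commutatorElement,
        commutatorElement_eq_one_iff_commute]
      exact hπ
    exact commutatorElement_eq_one_iff_commute.mp
      (commutatorElement_eq_one_of_mem_center_of_coprime hcenter hab)

theorem IsConj.orderOf_eq {a b : G} (h : IsConj a b) : orderOf a = orderOf b := by
  obtain ⟨c, rfl⟩ := isConj_iff.mp h
  exact ((MulAut.conj c).orderOf_eq a).symm

theorem not_dvd_orderOf_pow_ordProj [Finite G] {p : ℕ} (hp : p.Prime) (g : G) :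
    ¬ p ∣ orderOf (g ^ p ^ (orderOf g).factorization p) := by
  rw [orderOf_pow' g (pow_ne_zero _ hp.ne_zero), Nat.gcd_eq_right (Nat.ordProj_dvd _ _)]
  exact Nat.not_dvd_ordCompl hp (orderOf_pos g).ne'

theorem center_ne_bot_of_forall_commute_of_not_dvd_orderOf [Finite G] {p : ℕ} [hp : Fact p.Prime]
    {x : G} (hpx : p ∣ orderOf x) (hx : ∀ y : G, ¬ p ∣ orderOf y → Commute x y) :
    center G ≠ ⊥ := by
  let K := normalClosure {y : G | ¬ p ∣ orderOf y}
  have hK : ∀ y ∈ K, Commute x y := by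
    have : K ≤ centralizer {x} := by
      refine closure_le _ |>.mpr fun y hy => mem_centralizer_singleton_iff.mpr ?_
      obtain ⟨z, hz, hzy⟩ := Group.mem_conjugatesOfSet_iff.mp hy
      exact (hx y (hzy.orderOf_eq ▸ hz)).eq.symm
    exact fun y hy => (mem_centralizer_singleton_iff.mp (this hy)).symm
  let C := centralizer (K : Set G)
  let φ : G →* MulAut C := MulAut.conjNormal
  have hφK : ∀ y ∈ K, φ y = 1 := fun y hy => by
    ext c
    simp [φ, mem_centralizer_iff.mp c.2 y hy]
  have hrange : IsPGroup p φ.range := by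
    rintro ⟨_, g, rfl⟩
    refine ⟨(orderOf g).factorization p, Subtype.ext ?_⟩
    simpa using hφK _ (subset_normalClosure (not_dvd_orderOf_pow_ordProj hp.out g))
  have hxC : x ∈ C := mem_centralizer_iff.mpr fun y hy => (hK y hy).eq.symm
  have hpC : p ∣ Nat.card C :=
    hpx.trans ((orderOf_mk x hxC).symm ▸ orderOf_dvd_natCard (⟨x, hxC⟩ : C))
  obtain ⟨z, hz, hz1⟩ := hrange.exists_fixed_point_of_prime_dvd_card_of_fixed_point C hpC
    (a := 1) fun g => map_one _
  rw [ne_bot_iff_exists_ne_one]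
  refine ⟨⟨z, mem_center_iff.mpr fun g => ?_⟩, ?_⟩
  · have hconj : g * z * g⁻¹ = z := congrArg Subtype.val (hz ⟨φ g, g, rfl⟩)
    exact mul_inv_eq_iff_eq_mul.mp hconj
  · exact fun h => hz1 (Subtype.ext (congrArg Subtype.val h).symm)

theorem Subgroup.isNilpotent_of_le {H K : Subgroup G} (hKH : K ≤ H) [Group.IsNilpotent H] :
    Group.IsNilpotent K :=
  Group.nilpotent_of_mulEquiv (subgroupOfEquivOfLe hKH)

theorem isNilpotent_closure_pair_pow_left {x y : G} (h : Group.IsNilpotent (closure {x, y}))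
    (n : ℕ) : Group.IsNilpotent (closure {x ^ n, y}) :=
  isNilpotent_of_le <| closure_le _ |>.mpr <|
    Set.insert_subset (pow_mem (subset_closure (Set.mem_insert x {y})) n)
      (Set.singleton_subset_iff.mpr (subset_closure (Set.mem_insert_of_mem x rfl)))

theorem isNilpotent_closure_pair_map {G' : Type*} [Group G'] (f : G →* G') {x y : G}
    (h : Group.IsNilpotent (closure {x, y})) : Group.IsNilpotent (closure {f x, f y}) := by
  rw [← Set.image_pair, ← MonoidHom.map_closure]
  exact Group.nilpotent_of_surjective _ (f.subgroupMap_surjective _)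

theorem commute_of_isNilpotent_closure_pair {x y : G} (h : Group.IsNilpotent (closure {x, y}))
    (hxy : (orderOf x).Coprime (orderOf y)) : Commute x y := by
  let x' : closure ({x, y} : Set G) := ⟨x, subset_closure (by simp)⟩
  let y' : closure ({x, y} : Set G) := ⟨y, subset_closure (by simp)⟩
  have : Commute x' y' := Group.IsNilpotent.commute_of_coprime_orderOf <| by
    rwa [orderOf_mk, orderOf_mk]
  exact this.map (closure {x, y}).subtype

theorem center_ne_bot_of_forall_isNilpotent_closure_pair [Finite G] {x : G} (hx1 : x ≠ 1)
    (hx : ∀ y, Group.IsNilpotent (closure {x, y})) : center G ≠ ⊥ := by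
  let p := (orderOf x).minFac
  have : Fact p.Prime := ⟨Nat.minFac_prime (orderOf_eq_one_iff.not.mpr hx1)⟩
  let w := x ^ (orderOf x / p)
  have hw : orderOf w = p := orderOf_pow_orderOf_div (orderOf_pos x).ne' (Nat.minFac_dvd _)
  refine center_ne_bot_of_forall_commute_of_not_dvd_orderOf (x := w) hw.symm.dvd fun y hy => ?_
  refine commute_of_isNilpotent_closure_pair (isNilpotent_closure_pair_pow_left (hx y) _) ?_
  rwa [hw, Nat.Prime.coprime_iff_not_dvd Fact.out]

theorem card_quotient_center_lt [Finite G] (h : center G ≠ ⊥) :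
    Nat.card (G ⧸ center G) < Nat.card G := by
  rw [← index_eq_card, ← (center G).card_mul_index]
  exact lt_mul_left (Nat.pos_of_ne_zero index_ne_zero_of_finite)
    ((center G).one_lt_card_iff_ne_bot.mpr h)

theorem exists_mem_upperCentralSeries_of_forall_isNilpotent_closure_pair [Finite G] {x : G}
    (hx : ∀ y, Group.IsNilpotent (closure {x, y})) :
    ∃ k, x ∈ Subgroup.upperCentralSeries G k := by
  induction hn : Nat.card G using Nat.strong_induction_on generalizing G with
  | _ n ih =>
    obtain rfl | hx1 := eq_or_ne x 1
    · exact ⟨0, one_mem _⟩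
    let π := QuotientGroup.mk' (center G)
    have hπx : ∀ y, Group.IsNilpotent (closure {π x, y}) := fun y => by
      obtain ⟨y, rfl⟩ := QuotientGroup.mk'_surjective _ y
      exact isNilpotent_closure_pair_map π (hx y)
    have hlt := hn ▸
      card_quotient_center_lt (center_ne_bot_of_forall_isNilpotent_closure_pair hx1 hx)
    obtain ⟨k, hk⟩ := ih _ hlt hπx rfl
    exact ⟨k + 1, by rwa [← Subgroup.comap_upperCentralSeries_quotient_center]⟩

end

/-- In a finite group `G`, the element `x` satisfies: `⟨x, y⟩` is nilpotent for
every `y ∈ G`, iff `x` lies in the hypercentre of `G` (some term of the upper central series). -/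
theorem nilpotent_with_all_iff_mem_hypercentre (G : Type*) [Group G] [Finite G] (x : G) :
    (∀ y : G, Group.IsNilpotent (Subgroup.closure ({x, y} : Set G))) ↔
    (∃ k : ℕ, x ∈ upperCentralSeries G k) :=
  ⟨exists_mem_upperCentralSeries_of_forall_isNilpotent_closure_pair,
    fun ⟨_, hk⟩ => isNilpotent_closure_pair_of_mem_upperCentralSeries hk⟩
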